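/- Let ABCD be a tetrahedron with AB = CD = √41, AC = BD = √80, BC = AD = √89. The radius r of the inscribed sphere (the common distance from the incenter to all four faces) equals 20√21/63. -/

import Mathlib

open scoped InnerProductSpace

lemma face_infDist (P Q R X n : EuclideanSpace ℝ (Fin 3)) (c₁ c₂ t : ℝ)
    (hn : n ≠ 0)
    (hX : X - P = (c₁ • (Q - P) + c₂ • (R - P)) + t • n)
    (hQ : ⟪Q - P, n⟫_ℝ = 0) (hR : ⟪R - P, n⟫_ℝ = 0) :
    Metric.infDist X (affineSpan ℝ {P, Q, R} : Set (EuclideanSpace ℝ (Fin 3))) = |t| * ‖n‖ := by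
  have hPmem : P ∈ affineSpan ℝ ({P, Q, R} : Set (EuclideanSpace ℝ (Fin 3))) :=
    subset_affineSpan ℝ _ (by simp)
  have hQmem : Q ∈ affineSpan ℝ ({P, Q, R} : Set (EuclideanSpace ℝ (Fin 3))) :=
    subset_affineSpan ℝ _ (by simp)
  have hRmem : R ∈ affineSpan ℝ ({P, Q, R} : Set (EuclideanSpace ℝ (Fin 3))) :=
    subset_affineSpan ℝ _ (by simp)
  set u : EuclideanSpace ℝ (Fin 3) := c₁ • (Q - P) + c₂ • (R - P) with hu
  have hu_inner : ⟪u, n⟫_ℝ = 0 := by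
    rw [hu, inner_add_left, real_inner_smul_left, real_inner_smul_left, hQ, hR]
    ring
  -- key: for any y in the affine span, ⟪X - y, n⟫ = t * ‖n‖^2
  have hkey : ∀ y ∈ (affineSpan ℝ ({P, Q, R} : Set (EuclideanSpace ℝ (Fin 3))) :
      Set (EuclideanSpace ℝ (Fin 3))), ⟪X - y, n⟫_ℝ = t * ‖n‖ ^ 2 := by
    intro y hy
    have hyP : y - P ∈ vectorSpan ℝ ({P, Q, R} : Set (EuclideanSpace ℝ (Fin 3))) := by
      have := AffineSubspace.vsub_mem_direction hy hPmem
      rwa [direction_affineSpan] at this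
    have hperp : vectorSpan ℝ ({P, Q, R} : Set (EuclideanSpace ℝ (Fin 3))) ≤
        Submodule.span ℝ ({Q - P, R - P} : Set (EuclideanSpace ℝ (Fin 3))) := by
      rw [vectorSpan_def, Submodule.span_le]
      rintro v ⟨x, hx, z, hz, rfl⟩
      have hmem : ∀ w ∈ ({P, Q, R} : Set (EuclideanSpace ℝ (Fin 3))),
          w - P ∈ Submodule.span ℝ ({Q - P, R - P} : Set (EuclideanSpace ℝ (Fin 3))) := by
        rintro w (rfl | rfl | rfl)
        · simp
        · exact Submodule.subset_span (by simp)
        · exact Submodule.subset_span (by simp)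
      simp only [vsub_eq_sub]
      have : x - z = (x - P) - (z - P) := by abel
      rw [this]
      exact Submodule.sub_mem _ (hmem x hx) (hmem z hz)
    have hyspan := hperp hyP
    have hy_inner : ⟪y - P, n⟫_ℝ = 0 := by
      obtain ⟨d₁, d₂, hd⟩ := Submodule.mem_span_pair.mp hyspan
      rw [← hd, inner_add_left, real_inner_smul_left, real_inner_smul_left, hQ, hR]
      ring
    have hXy : X - y = (u - (y - P)) + t • n := by
      rw [hu]; rw [hu] at hX
      have : X - y = (X - P) - (y - P) := by abel
      rw [this, hX]; abel
    rw [hXy, inner_add_left, inner_sub_left, hu_inner, hy_inner, real_inner_smul_left,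
      real_inner_self_eq_norm_sq]
    ring
  have hnpos : (0:ℝ) < ‖n‖ := norm_pos_iff.mpr hn
  apply le_antisymm
  · -- upper bound via the foot u +ᵥ P
    have hdir : u ∈ (affineSpan ℝ ({P, Q, R} : Set (EuclideanSpace ℝ (Fin 3)))).direction := by
      apply Submodule.add_mem
      · exact Submodule.smul_mem _ _ (AffineSubspace.vsub_mem_direction hQmem hPmem)
      · exact Submodule.smul_mem _ _ (AffineSubspace.vsub_mem_direction hRmem hPmem)
    have hfoot : u +ᵥ P ∈ affineSpan ℝ ({P, Q, R} : Set (EuclideanSpace ℝ (Fin 3))) :=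
      AffineSubspace.vadd_mem_of_mem_direction hdir hPmem
    have hle := Metric.infDist_le_dist_of_mem (x := X) hfoot
    have hdist : dist X (u +ᵥ P) = |t| * ‖n‖ := by
      rw [dist_eq_norm]
      have : X - (u +ᵥ P) = t • n := by
        have h1 : X - (u +ᵥ P) = (X - P) - u := by
          simp only [vadd_eq_add]; abel
        rw [h1, hX]; abel
      rw [this, norm_smul, Real.norm_eq_abs]
    rwa [hdist] at hle
  · -- lower bound
    rw [Metric.infDist_eq_iInf]
    have : Nonempty (affineSpan ℝ ({P, Q, R} : Set (EuclideanSpace ℝ (Fin 3))) :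
        Set (EuclideanSpace ℝ (Fin 3))) := ⟨⟨P, hPmem⟩⟩
    apply le_ciInf
    intro y
    have h1 : |⟪X - (y : EuclideanSpace ℝ (Fin 3)), n⟫_ℝ| ≤ ‖X - (y : EuclideanSpace ℝ (Fin 3))‖ * ‖n‖ :=
      abs_real_inner_le_norm _ _
    rw [hkey y y.2] at h1
    have h2 : |t * ‖n‖ ^ 2| = (|t| * ‖n‖) * ‖n‖ := by
      rw [abs_mul, abs_pow, abs_of_nonneg (norm_nonneg n)]; ring
    rw [h2] at h1
    have := (mul_le_mul_iff_of_pos_right hnpos).mp h1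
    rwa [dist_eq_norm]

theorem stmt_16 (A B C D : EuclideanSpace ℝ (Fin 3))
    (hABCD : AffineIndependent ℝ ![A, B, C, D])
    (hAB : dist A B = Real.sqrt 41) (hCD : dist C D = Real.sqrt 41)
    (hAC : dist A C = Real.sqrt 80) (hBD : dist B D = Real.sqrt 80)
    (hBC : dist B C = Real.sqrt 89) (hAD : dist A D = Real.sqrt 89)
    (I : EuclideanSpace ℝ (Fin 3)) (r : ℝ)
    (hI : I ∈ interior (convexHull ℝ {A, B, C, D} : Set (EuclideanSpace ℝ (Fin 3))))
    (h1 : Metric.infDist I (affineSpan ℝ {A, B, C} : Set (EuclideanSpace ℝ (Fin 3))) = r)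
    (h2 : Metric.infDist I (affineSpan ℝ {A, B, D} : Set (EuclideanSpace ℝ (Fin 3))) = r)
    (h3 : Metric.infDist I (affineSpan ℝ {A, C, D} : Set (EuclideanSpace ℝ (Fin 3))) = r)
    (h4 : Metric.infDist I (affineSpan ℝ {B, C, D} : Set (EuclideanSpace ℝ (Fin 3))) = r) :
    r = 20 * Real.sqrt 21 / 63 := by
  set va : EuclideanSpace ℝ (Fin 3) := B - A with hva
  set vb : EuclideanSpace ℝ (Fin 3) := C - A with hvb
  set vc : EuclideanSpace ℝ (Fin 3) := D - A with hvc
  -- norm squares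
  have hA2 : ‖va‖ ^ 2 = 41 := by
    rw [hva, ← neg_sub A B, norm_neg, ← dist_eq_norm, hAB, Real.sq_sqrt] <;> norm_num
  have hB2 : ‖vb‖ ^ 2 = 80 := by
    rw [hvb, ← neg_sub A C, norm_neg, ← dist_eq_norm, hAC, Real.sq_sqrt] <;> norm_num
  have hC2 : ‖vc‖ ^ 2 = 89 := by
    rw [hvc, ← neg_sub A D, norm_neg, ← dist_eq_norm, hAD, Real.sq_sqrt] <;> norm_num
  have haa : ⟪va, va⟫_ℝ = 41 := by rw [real_inner_self_eq_norm_sq, hA2]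
  have hbb : ⟪vb, vb⟫_ℝ = 80 := by rw [real_inner_self_eq_norm_sq, hB2]
  have hcc : ⟪vc, vc⟫_ℝ = 89 := by rw [real_inner_self_eq_norm_sq, hC2]
  have hab : ⟪va, vb⟫_ℝ = 16 := by
    have h : ‖va - vb‖ ^ 2 = 89 := by
      have e : va - vb = B - C := by rw [hva, hvb]; abel
      rw [e, ← dist_eq_norm, hBC, Real.sq_sqrt] <;> norm_num
    rw [norm_sub_sq_real, hA2, hB2] at h; linarith
  have hac : ⟪va, vc⟫_ℝ = 25 := by
    have h : ‖va - vc‖ ^ 2 = 80 := by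
      have e : va - vc = B - D := by rw [hva, hvc]; abel
      rw [e, ← dist_eq_norm, hBD, Real.sq_sqrt] <;> norm_num
    rw [norm_sub_sq_real, hA2, hC2] at h; linarith
  have hbc : ⟪vb, vc⟫_ℝ = 64 := by
    have h : ‖vb - vc‖ ^ 2 = 41 := by
      have e : vb - vc = C - D := by rw [hvb, hvc]; abel
      rw [e, ← dist_eq_norm, hCD, Real.sq_sqrt] <;> norm_num
    rw [norm_sub_sq_real, hB2, hC2] at h; linarith
  have hba : ⟪vb, va⟫_ℝ = 16 := by rw [real_inner_comm]; exact hab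
  have hca : ⟪vc, va⟫_ℝ = 25 := by rw [real_inner_comm]; exact hac
  have hcb : ⟪vc, vb⟫_ℝ = 64 := by rw [real_inner_comm]; exact hbc
  -- affine basis and barycentric coordinates
  have htot : affineSpan ℝ (Set.range ![A, B, C, D]) = ⊤ := by
    rw [hABCD.affineSpan_eq_top_iff_card_eq_finrank_add_one]
    simp [finrank_euclideanSpace]
  let bb : AffineBasis (Fin 4) ℝ (EuclideanSpace ℝ (Fin 3)) := ⟨![A, B, C, D], hABCD, htot⟩
  set δ : ℝ := bb.coord 0 I with hδdef
  set α : ℝ := bb.coord 1 I with hαdef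
  set β : ℝ := bb.coord 2 I with hβdef
  set γ : ℝ := bb.coord 3 I with hγdef
  have hrange : Set.range ⇑bb = ({A, B, C, D} : Set (EuclideanSpace ℝ (Fin 3))) := by
    show Set.range ![A, B, C, D] = _
    simp only [Matrix.range_cons, Matrix.range_empty, Set.union_empty, Set.singleton_union]
  have hpos : ∀ i, 0 < bb.coord i I := by
    have h := bb.interior_convexHull
    rw [hrange] at h
    rw [h] at hI
    exact hI
  have hsum : δ + α + β + γ = 1 := by
    have h := bb.sum_coord_apply_eq_one I
    rw [Fin.sum_univ_four] at h
    rw [hδdef, hαdef, hβdef, hγdef]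
    exact h
  have hcomb : δ • A + α • B + β • C + γ • D = I := by
    have h := bb.linear_combination_coord_eq_self I
    rw [Fin.sum_univ_four] at h
    rw [hδdef, hαdef, hβdef, hγdef]
    convert h using 3 <;> rfl
  have hw : I - A = α • va + β • vb + γ • vc := by
    have hδ : δ = 1 - α - β - γ := by linarith
    have h : I - A = (δ • A + α • B + β • C + γ • D) - A := by rw [hcomb]
    rw [h, hδ, hva, hvb, hvc]
    module
  have hwB : I - B = (α - 1) • va + β • vb + γ • vc := by
    have h : I - B = (I - A) - va := by rw [hva]; abel
    rw [h, hw]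
    module
  -- normals
  set n₁ : EuclideanSpace ℝ (Fin 3) := vc - (61/189 : ℝ) • va - (139/189 : ℝ) • vb with hn₁
  set n₂ : EuclideanSpace ℝ (Fin 3) := vb + (11/189 : ℝ) • va - (139/189 : ℝ) • vc with hn₂
  set n₃ : EuclideanSpace ℝ (Fin 3) := va + (11/189 : ℝ) • vb - (61/189 : ℝ) • vc with hn₃
  set n₄ : EuclideanSpace ℝ (Fin 3) :=
    va + (61/189 : ℝ) • (vb - va) - (11/189 : ℝ) • (vc - va) with hn₄
  have hQ1 : ⟪va, n₁⟫_ℝ = 0 := by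
    simp only [hn₁, inner_sub_right, inner_add_right, real_inner_smul_right,
      haa, hbb, hcc, hab, hba, hac, hca, hbc, hcb]
    norm_num
  have hR1 : ⟪vb, n₁⟫_ℝ = 0 := by
    simp only [hn₁, inner_sub_right, inner_add_right, real_inner_smul_right,
      haa, hbb, hcc, hab, hba, hac, hca, hbc, hcb]
    norm_num
  have hQ2 : ⟪va, n₂⟫_ℝ = 0 := by
    simp only [hn₂, inner_sub_right, inner_add_right, real_inner_smul_right,
      haa, hbb, hcc, hab, hba, hac, hca, hbc, hcb]
    norm_num
  have hR2 : ⟪vc, n₂⟫_ℝ = 0 := by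
    simp only [hn₂, inner_sub_right, inner_add_right, real_inner_smul_right,
      haa, hbb, hcc, hab, hba, hac, hca, hbc, hcb]
    norm_num
  have hQ3 : ⟪vb, n₃⟫_ℝ = 0 := by
    simp only [hn₃, inner_sub_right, inner_add_right, real_inner_smul_right,
      haa, hbb, hcc, hab, hba, hac, hca, hbc, hcb]
    norm_num
  have hR3 : ⟪vc, n₃⟫_ℝ = 0 := by
    simp only [hn₃, inner_sub_right, inner_add_right, real_inner_smul_right,
      haa, hbb, hcc, hab, hba, hac, hca, hbc, hcb]
    norm_num
  have hQ4 : ⟪vb - va, n₄⟫_ℝ = 0 := by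
    simp only [hn₄, inner_sub_right, inner_add_right, inner_sub_left, real_inner_smul_right,
      haa, hbb, hcc, hab, hba, hac, hca, hbc, hcb]
    norm_num
  have hR4 : ⟪vc - va, n₄⟫_ℝ = 0 := by
    simp only [hn₄, inner_sub_right, inner_add_right, inner_sub_left, real_inner_smul_right,
      haa, hbb, hcc, hab, hba, hac, hca, hbc, hcb]
    norm_num
  -- norms of normals
  have hsq1 : ⟪n₁, n₁⟫_ℝ = 6400/189 := by
    simp only [hn₁, inner_sub_right, inner_add_right, inner_sub_left, inner_add_left,
      real_inner_smul_right, real_inner_smul_left,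
      haa, hbb, hcc, hab, hba, hac, hca, hbc, hcb]
    norm_num
  have hsq2 : ⟪n₂, n₂⟫_ℝ = 6400/189 := by
    simp only [hn₂, inner_sub_right, inner_add_right, inner_sub_left, inner_add_left,
      real_inner_smul_right, real_inner_smul_left,
      haa, hbb, hcc, hab, hba, hac, hca, hbc, hcb]
    norm_num
  have hsq3 : ⟪n₃, n₃⟫_ℝ = 6400/189 := by
    simp only [hn₃, inner_sub_right, inner_add_right, inner_sub_left, inner_add_left,
      real_inner_smul_right, real_inner_smul_left,
      haa, hbb, hcc, hab, hba, hac, hca, hbc, hcb]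
    norm_num
  have hsq4 : ⟪n₄, n₄⟫_ℝ = 6400/189 := by
    simp only [hn₄, inner_sub_right, inner_add_right, inner_sub_left, inner_add_left,
      real_inner_smul_right, real_inner_smul_left,
      haa, hbb, hcc, hab, hba, hac, hca, hbc, hcb]
    norm_num
  set N : ℝ := Real.sqrt (6400/189) with hN
  have hnorm : ∀ n : EuclideanSpace ℝ (Fin 3), ⟪n, n⟫_ℝ = 6400/189 → ‖n‖ = N := by
    intro n hsq
    rw [hN, ← Real.sqrt_sq (norm_nonneg n), ← real_inner_self_eq_norm_sq, hsq]
  have hne : ∀ n : EuclideanSpace ℝ (Fin 3), ⟪n, n⟫_ℝ = 6400/189 → n ≠ 0 := by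
    intro n hsq h
    rw [h, inner_zero_left] at hsq
    norm_num at hsq
  have hNpos : 0 < N := by rw [hN]; positivity
  -- apply the face lemma to the four faces
  have e1 := face_infDist A B C I n₁ (α + 61/189*γ) (β + 139/189*γ) γ (hne _ hsq1)
    (by rw [show B - A = va from hva.symm, show C - A = vb from hvb.symm, hw, hn₁]; module)
    (by rw [show B - A = va from hva.symm]; exact hQ1)
    (by rw [show C - A = vb from hvb.symm]; exact hR1)
  have e2 := face_infDist A B D I n₂ (α - 11/189*β) (γ + 139/189*β) β (hne _ hsq2)
    (by rw [show B - A = va from hva.symm, show D - A = vc from hvc.symm, hw, hn₂]; module)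
    (by rw [show B - A = va from hva.symm]; exact hQ2)
    (by rw [show D - A = vc from hvc.symm]; exact hR2)
  have e3 := face_infDist A C D I n₃ (β - 11/189*α) (γ + 61/189*α) α (hne _ hsq3)
    (by rw [show C - A = vb from hvb.symm, show D - A = vc from hvc.symm, hw, hn₃]; module)
    (by rw [show C - A = vb from hvb.symm]; exact hQ3)
    (by rw [show D - A = vc from hvc.symm]; exact hR3)
  have e4 := face_infDist B C D I n₄ (β + 61/189*(1-α-β-γ)) (γ - 11/189*(1-α-β-γ))
    (α + β + γ - 1) (hne _ hsq4)
    (by rw [show C - B = vb - va by rw [hva, hvb]; abel,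
            show D - B = vc - va by rw [hva, hvc]; abel, hwB, hn₄]; module)
    (by rw [show C - B = vb - va by rw [hva, hvb]; abel]; exact hQ4)
    (by rw [show D - B = vc - va by rw [hva, hvc]; abel]; exact hR4)
  rw [hnorm _ hsq1] at e1
  rw [hnorm _ hsq2] at e2
  rw [hnorm _ hsq3] at e3
  rw [hnorm _ hsq4] at e4
  rw [h1] at e1; rw [h2] at e2; rw [h3] at e3; rw [h4] at e4
  -- positivity of coordinates
  have hδpos : 0 < δ := hpos 0
  have hαpos : 0 < α := hpos 1
  have hβpos : 0 < β := hpos 2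
  have hγpos : 0 < γ := hpos 3
  rw [abs_of_pos hγpos] at e1
  rw [abs_of_pos hβpos] at e2
  rw [abs_of_pos hαpos] at e3
  rw [show |α + β + γ - 1| = δ by rw [abs_of_neg (by linarith)]; linarith] at e4
  -- solve
  have hα4 : α = 1/4 := by
    have h12 : γ = β := mul_right_cancel₀ (ne_of_gt hNpos) (e1.symm.trans e2)
    have h13 : γ = α := mul_right_cancel₀ (ne_of_gt hNpos) (e1.symm.trans e3)
    have h14 : γ = δ := mul_right_cancel₀ (ne_of_gt hNpos) (e1.symm.trans e4)
    linarith
  have hNval : N = 80 * Real.sqrt 21 / 63 := by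
    rw [hN, show (6400/189 : ℝ) = (80 * Real.sqrt 21 / 63)^2 by
      rw [div_pow, mul_pow, Real.sq_sqrt (by norm_num : (0:ℝ) ≤ 21)]; norm_num]
    exact Real.sqrt_sq (by positivity)
  rw [e3, hα4, hNval]
  ring
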